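/- Let m > 1 and let r₁ ≥ r₂ ≥ r₃ be rational numbers with r₁ + r₂ + r₃ = 0, r₁ > 0 > r₃, and r₂ ≤ −r₃/(m+1). If (β₁,β₂,β₃) are nonnegative integers with β₁ + β₂ + β₃ = m and β₁ > (m²+m+1)/(2m+1), then r₁(β₁+1) + r₂β₂ + r₃(β₃+1) > 0. -/
import Mathlib


theorem stmt_12 (m : ℤ) (hm : 1 < m) (r₁ r₂ r₃ : ℚ)
    (h12 : r₂ ≤ r₁) (h23 : r₃ ≤ r₂) (hsum : r₁ + r₂ + r₃ = 0)
    (h1 : 0 < r₁) (h3 : r₃ < 0)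
    (h2 : r₂ ≤ -r₃ / ((m : ℚ) + 1))
    (β₁ β₂ β₃ : ℕ) (hβ : (β₁ : ℤ) + (β₂ : ℤ) + (β₃ : ℤ) = m)
    (hβ₁ : (β₁ : ℚ) > ((m : ℚ) ^ 2 + (m : ℚ) + 1) / (2 * (m : ℚ) + 1)) :
    0 < r₁ * ((β₁ : ℚ) + 1) + r₂ * (β₂ : ℚ) + r₃ * ((β₃ : ℚ) + 1) := by
  have hmq : (1 : ℚ) < (m : ℚ) := by exact_mod_cast hm
  have hm1 : (0 : ℚ) < (m : ℚ) + 1 := by linarith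
  have h2m1 : (0 : ℚ) < 2 * (m : ℚ) + 1 := by linarith
  have hβq : (β₁ : ℚ) + (β₂ : ℚ) + (β₃ : ℚ) = (m : ℚ) := by exact_mod_cast hβ
  have h2' : r₂ * ((m : ℚ) + 1) ≤ -r₃ := by
    calc r₂ * ((m:ℚ)+1) ≤ (-r₃ / ((m:ℚ)+1)) * ((m:ℚ)+1) := by
          exact mul_le_mul_of_nonneg_right h2 (le_of_lt hm1)
      _ = -r₃ := by field_simp
  have hβ₁' : ((m : ℚ) ^ 2 + (m : ℚ) + 1) < (β₁ : ℚ) * (2 * (m : ℚ) + 1) := by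
    have := (div_lt_iff₀ h2m1).mp hβ₁
    linarith
  have hβ₂ : (0 : ℚ) ≤ (β₂ : ℚ) := Nat.cast_nonneg _
  -- r₁ - r₃ ≥ -r₃*(2m+1)/(m+1)
  have key : (r₁ - r₃) * ((m:ℚ)+1) ≥ -r₃ * (2*(m:ℚ)+1) := by nlinarith
  nlinarith [mul_le_mul_of_nonneg_left hβ₂ (sub_nonneg.mpr h23),
    mul_lt_mul_of_pos_left hβ₁' (div_pos (by linarith) h2m1 : (0:ℚ) < (r₁ - r₃)/(2*(m:ℚ)+1)),
    mul_nonneg (le_of_lt (neg_pos.mpr h3)) (le_of_lt hm1)]
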